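/- If A^⊥ ∩ ℤ^n = {0}, then D^𝔤 = E, i.e. the invariant differential operators are exactly the polynomials in the Euler operators e_1,…,e_n. -/

import Mathlib

/-!
Each monomial `x^γ` is a joint eigenvector of the `τ_i`, with eigenvalues `-∑_j a^i_j γ_j`, and
two exponents with the same eigenvalues differ by a vector of `A^⊥ ∩ ℤ^n`. Hence an invariant
operator `ω` maps `x^γ` to `c(γ) x^γ`. Writing `ω` in normal order `∑ c_{αβ} x^α ∂^β`, only the
terms with `α = β` contribute to `c(γ)`, and `x^β ∂^β x^γ = ∏_j γ_j (γ_j - 1) ⋯ (γ_j - β_j + 1) x^γ`;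
so `c(γ) = p(γ)` for the polynomial `p = ∑_β c_{ββ} ∏_j X_j (X_j - 1) ⋯ (X_j - β_j + 1)`, and
therefore `ω = p(e_1, …, e_n)`.
-/

open MvPolynomial

noncomputable section

/-- The polynomial ring `P = ℂ[x_1, …, x_n]`. -/
abbrev Pn (n : ℕ) := MvPolynomial (Fin n) ℂ

/-- Multiplication by the variable `x_j`, as a ℂ-linear endomorphism of `P`. -/
def Xop (n : ℕ) (j : Fin n) : Module.End ℂ (Pn n) :=
  LinearMap.mulLeft ℂ (X j)

/-- The partial derivative `∂_j`, as a ℂ-linear endomorphism of `P`. -/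
def Dop (n : ℕ) (j : Fin n) : Module.End ℂ (Pn n) :=
  (pderiv j).toLinearMap

/-- The Weyl algebra `D`: the ℂ-subalgebra of `End_ℂ(P)` generated by the `X_j` and `∂_j`. -/
def weylD (n : ℕ) : Subalgebra ℂ (Module.End ℂ (Pn n)) :=
  Algebra.adjoin ℂ (Set.range (Xop n) ∪ Set.range (Dop n))

/-- The Euler operator `e_j = X_j ∘ ∂_j`. -/
def eulOp (n : ℕ) (j : Fin n) : Module.End ℂ (Pn n) :=
  Xop n j * Dop n j

/-- The subalgebra `E = ℂ[e_1, …, e_n]` generated by the Euler operators. -/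
def eulAlg (n : ℕ) : Subalgebra ℂ (Module.End ℂ (Pn n)) :=
  Algebra.adjoin ℂ (Set.range (eulOp n))

/-- The operator `τ_c = -∑_j c_j e_j` attached to a vector `c ∈ ℂ^n`. -/
def tauC (n : ℕ) (c : Fin n → ℂ) : Module.End ℂ (Pn n) :=
  -∑ j, c j • eulOp n j

/-- The algebra `D^𝔤` of invariant differential operators: elements of `D` commuting
with each `τ_i = -∑_j a^i_j e_j`. -/
def invD (n m : ℕ) (a : Fin m → Fin n → ℂ) : Set (Module.End ℂ (Pn n)) :=
  {ω | ω ∈ weylD n ∧ ∀ i : Fin m, tauC n (a i) * ω = ω * tauC n (a i)}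

theorem MvPolynomial.linearMap_ext_monomial_one {σ R M : Type*} [CommSemiring R]
    [AddCommMonoid M] [Module R M] {f g : MvPolynomial σ R →ₗ[R] M}
    (h : ∀ γ : σ →₀ ℕ, f (monomial γ 1) = g (monomial γ 1)) : f = g :=
  (basisMonomials σ R).ext fun γ => by simpa using h γ

section

variable {n : ℕ}

theorem Xop_monomial (j : Fin n) (γ : Fin n →₀ ℕ) (c : ℂ) :
    Xop n j (monomial γ c) = monomial (γ + Finsupp.single j 1) c := by
  rw [Xop, LinearMap.mulLeft_apply, X, monomial_mul, one_mul, add_comm]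

theorem eulOp_monomial (j : Fin n) (γ : Fin n →₀ ℕ) (c : ℂ) :
    eulOp n j (monomial γ c) = (γ j : ℂ) • monomial γ c := by
  rcases Nat.eq_zero_or_pos (γ j) with h | h
  · simp [eulOp, Dop, h]
  · have hle : Finsupp.single j 1 ≤ γ := Finsupp.single_le_iff.mpr h
    simp [eulOp, Dop, Xop_monomial, smul_monomial, mul_comm, tsub_add_cancel_of_le hle]

theorem coeff_eulOp (j : Fin n) (δ : Fin n →₀ ℕ) (f : Pn n) :
    coeff δ (eulOp n j f) = (δ j : ℂ) * coeff δ f := by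
  induction f using MvPolynomial.induction_on' with
  | monomial γ c =>
    rw [eulOp_monomial, coeff_smul, coeff_monomial, smul_eq_mul]
    split_ifs with hγδ
    · rw [hγδ]
    · simp
  | add p q hp hq => simp only [map_add, coeff_add, hp, hq, mul_add]

theorem coeff_tauC (c : Fin n → ℂ) (δ : Fin n →₀ ℕ) (f : Pn n) :
    coeff δ (tauC n c f) = (-∑ j, c j * δ j) * coeff δ f := by
  simp only [tauC, LinearMap.neg_apply, LinearMap.sum_apply, LinearMap.smul_apply, coeff_neg,
    coeff_sum, coeff_smul, coeff_eulOp, smul_eq_mul, Finset.sum_mul, mul_assoc, neg_mul]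

theorem tauC_monomial (c : Fin n → ℂ) (γ : Fin n →₀ ℕ) :
    tauC n c (monomial γ 1) = (-∑ j, c j * γ j) • monomial γ 1 := by
  ext δ
  rw [coeff_tauC, coeff_smul, smul_eq_mul, coeff_monomial]
  split_ifs with h
  · rw [h]
  · simp

theorem eq_of_forall_sum_mul_eq {m : ℕ} {a : Fin m → Fin n → ℂ}
    (h : ∀ l : Fin n → ℤ,
      (∀ v ∈ Submodule.span ℂ (Set.range a), ∑ j, (l j : ℂ) * v j = 0) → l = 0)
    {γ δ : Fin n →₀ ℕ} (hγδ : ∀ i, ∑ j, a i j * δ j = ∑ j, a i j * γ j) : δ = γ := by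
  set l : Fin n → ℤ := fun j => δ j - γ j
  let φ : (Fin n → ℂ) →ₗ[ℂ] ℂ := ∑ j, (l j : ℂ) • LinearMap.proj j
  have hφ : Set.range a ⊆ LinearMap.ker φ := by
    rintro _ ⟨i, rfl⟩
    simp [φ, l, mul_comm _ (a i _), mul_sub, Finset.sum_sub_distrib, hγδ i]
  have hl : l = 0 := h l fun v hv => by simpa [φ] using Submodule.span_le.mpr hφ hv
  ext j
  simpa [l, sub_eq_zero] using congrFun hl j

theorem apply_monomial_eq_coeff_smul_of_commute_tauC {m : ℕ} {a : Fin m → Fin n → ℂ}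
    (h : ∀ l : Fin n → ℤ,
      (∀ v ∈ Submodule.span ℂ (Set.range a), ∑ j, (l j : ℂ) * v j = 0) → l = 0)
    {ω : Module.End ℂ (Pn n)} (hω : ∀ i, tauC n (a i) * ω = ω * tauC n (a i))
    (γ : Fin n →₀ ℕ) : ω (monomial γ 1) = coeff γ (ω (monomial γ 1)) • monomial γ 1 := by
  ext δ
  rw [coeff_smul, coeff_monomial, smul_eq_mul]
  rcases eq_or_ne γ δ with rfl | hγδ
  · simp
  rw [if_neg hγδ, mul_zero]
  by_contra hne
  refine hγδ (eq_of_forall_sum_mul_eq h fun i => ?_).symm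
  have hcoeff := congrArg (coeff δ) (LinearMap.congr_fun (hω i) (monomial γ 1))
  rw [Module.End.mul_apply, Module.End.mul_apply, tauC_monomial, map_smul, coeff_tauC,
    coeff_smul, smul_eq_mul] at hcoeff
  exact neg_inj.mp (mul_right_cancel₀ hne hcoeff)

theorem exists_mem_eulAlg_apply_monomial (p : MvPolynomial (Fin n) ℂ) :
    ∃ T ∈ eulAlg n, ∀ γ : Fin n →₀ ℕ,
      T (monomial γ 1) = eval (fun j => (γ j : ℂ)) p • monomial γ 1 := by
  induction p using MvPolynomial.induction_on with
  | C c => exact ⟨algebraMap ℂ _ c, Subalgebra.algebraMap_mem _ c, fun γ => by simp⟩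
  | add p q hp hq =>
    obtain ⟨T, hT, hTp⟩ := hp
    obtain ⟨U, hU, hUq⟩ := hq
    exact ⟨T + U, add_mem hT hU, fun γ => by simp [hTp, hUq, add_smul]⟩
  | mul_X p j hp =>
    obtain ⟨T, hT, hTp⟩ := hp
    refine ⟨T * eulOp n j, mul_mem hT (Algebra.subset_adjoin ⟨j, rfl⟩), fun γ => ?_⟩
    rw [Module.End.mul_apply, eulOp_monomial, map_smul, hTp, eval_mul, eval_X, smul_smul,
      mul_comm]

theorem eulAlg_le_weylD : eulAlg n ≤ weylD n :=
  Algebra.adjoin_le <| Set.range_subset_iff.mpr fun j =>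
    mul_mem (Algebra.subset_adjoin (Or.inl ⟨j, rfl⟩)) (Algebra.subset_adjoin (Or.inr ⟨j, rfl⟩))

theorem commute_eulOp (j k : Fin n) : Commute (eulOp n j) (eulOp n k) :=
  linearMap_ext_monomial_one fun γ => by
    simp only [Module.End.mul_apply, eulOp_monomial, map_smul, smul_smul, mul_comm]

theorem commute_tauC_of_mem_eulAlg {ω : Module.End ℂ (Pn n)} (hω : ω ∈ eulAlg n)
    (c : Fin n → ℂ) : Commute (tauC n c) ω := by
  have hcomm : ∀ j, Commute (eulOp n j) ω := fun j => by
    induction hω using Algebra.adjoin_induction with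
    | mem x hx => obtain ⟨k, rfl⟩ := hx; exact commute_eulOp j k
    | algebraMap r => exact Algebra.commute_algebraMap_right r _
    | add x y _ _ hx hy => exact hx.add_right hy
    | mul x y _ _ hx hy => exact hx.mul_right hy
  exact (Commute.sum_left _ _ _ fun j _ => (hcomm j).smul_left (c j)).neg_left

def multiDescFactorial (γ β : Fin n →₀ ℕ) : ℕ := ∏ j, (γ j).descFactorial (β j)

theorem multiDescFactorial_zero_right (γ : Fin n →₀ ℕ) : multiDescFactorial γ 0 = 1 := by
  simp [multiDescFactorial]

theorem multiDescFactorial_add_single (γ β : Fin n →₀ ℕ) (j : Fin n) :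
    multiDescFactorial γ (β + Finsupp.single j 1) = (γ j - β j) * multiDescFactorial γ β := by
  simp only [multiDescFactorial, Finsupp.add_apply, Finsupp.single_apply]
  rw [← Finset.mul_prod_erase _ _ (Finset.mem_univ j),
    ← Finset.mul_prod_erase _ (fun k => (γ k).descFactorial (β k)) (Finset.mem_univ j),
    ← mul_assoc, if_pos rfl, Nat.descFactorial_succ]
  congr 1
  refine Finset.prod_congr rfl fun k hk => ?_
  rw [if_neg (Finset.ne_of_mem_erase hk).symm, add_zero]

theorem le_of_multiDescFactorial_ne_zero {γ β : Fin n →₀ ℕ}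
    (h : multiDescFactorial γ β ≠ 0) : β ≤ γ := fun j =>
  not_lt.mp fun hj =>
    h (Finset.prod_eq_zero (Finset.mem_univ j) (Nat.descFactorial_eq_zero_iff_lt.mpr hj))

def Xpow (α : Fin n →₀ ℕ) : Module.End ℂ (Pn n) := LinearMap.mulLeft ℂ (monomial α 1)

/-- `∂^β`, given on the monomial basis. The coefficient vanishes unless `β ≤ γ`, so the truncated
subtraction `γ - β` is harmless. -/
def Dpow (β : Fin n →₀ ℕ) : Module.End ℂ (Pn n) :=
  (basisMonomials (Fin n) ℂ).constr ℂ fun γ => monomial (γ - β) (multiDescFactorial γ β : ℂ)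

theorem Xpow_monomial (α γ : Fin n →₀ ℕ) (c : ℂ) :
    Xpow α (monomial γ c) = monomial (α + γ) c := by
  rw [Xpow, LinearMap.mulLeft_apply, monomial_mul, one_mul]

theorem Dpow_monomial (β γ : Fin n →₀ ℕ) :
    Dpow β (monomial γ 1) = monomial (γ - β) (multiDescFactorial γ β : ℂ) := by
  simpa [Dpow] using (basisMonomials (Fin n) ℂ).constr_basis ℂ
    (fun γ => monomial (γ - β) (multiDescFactorial γ β : ℂ)) γ

theorem Xpow_zero : Xpow (0 : Fin n →₀ ℕ) = 1 := by
  refine LinearMap.ext fun f => ?_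
  simp [Xpow]

theorem Dpow_zero : Dpow (0 : Fin n →₀ ℕ) = 1 :=
  linearMap_ext_monomial_one fun γ => by simp [Dpow_monomial, multiDescFactorial_zero_right]

theorem Xop_mul_Xpow (j : Fin n) (α : Fin n →₀ ℕ) :
    Xop n j * Xpow α = Xpow (Finsupp.single j 1 + α) := by
  refine LinearMap.ext fun f => ?_
  simp [Xop, Xpow, X, monomial_mul, ← mul_assoc]

theorem Dop_mul_Xpow (j : Fin n) (α : Fin n →₀ ℕ) :
    Dop n j * Xpow α = Xpow α * Dop n j + (α j : ℂ) • Xpow (α - Finsupp.single j 1) := by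
  refine LinearMap.ext fun f => ?_
  simp [Dop, Xpow, Derivation.leibniz, add_comm, mul_comm, smul_monomial, ← mul_smul_comm]

theorem Dop_mul_Dpow (j : Fin n) (β : Fin n →₀ ℕ) :
    Dop n j * Dpow β = Dpow (β + Finsupp.single j 1) :=
  linearMap_ext_monomial_one fun γ => by
    simp [Dop, Dpow_monomial, multiDescFactorial_add_single, tsub_tsub, mul_comm]

def normalOrdered : Submodule ℂ (Module.End ℂ (Pn n)) :=
  Submodule.span ℂ (Set.range fun αβ : (Fin n →₀ ℕ) × (Fin n →₀ ℕ) => Xpow αβ.1 * Dpow αβ.2)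

theorem Xpow_mul_Dpow_mem_normalOrdered (α β : Fin n →₀ ℕ) :
    Xpow α * Dpow β ∈ normalOrdered :=
  Submodule.subset_span ⟨(α, β), rfl⟩

theorem mul_mem_normalOrdered {S T : Module.End ℂ (Pn n)}
    (hS : ∀ α β, S * (Xpow α * Dpow β) ∈ normalOrdered) (hT : T ∈ normalOrdered) :
    S * T ∈ normalOrdered := by
  induction hT using Submodule.span_induction with
  | mem x hx => obtain ⟨⟨α, β⟩, rfl⟩ := hx; exact hS α β
  | zero => rw [mul_zero]; exact zero_mem _
  | add x y _ _ hx hy => rw [mul_add]; exact add_mem hx hy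
  | smul c x _ hx => rw [mul_smul_comm]; exact Submodule.smul_mem _ c hx

theorem Xop_mul_mem_normalOrdered (j : Fin n) {T : Module.End ℂ (Pn n)}
    (hT : T ∈ normalOrdered) : Xop n j * T ∈ normalOrdered :=
  mul_mem_normalOrdered (fun α β => by
    rw [← mul_assoc, Xop_mul_Xpow]; exact Xpow_mul_Dpow_mem_normalOrdered _ _) hT

theorem Dop_mul_mem_normalOrdered (j : Fin n) {T : Module.End ℂ (Pn n)}
    (hT : T ∈ normalOrdered) : Dop n j * T ∈ normalOrdered :=
  mul_mem_normalOrdered (fun α β => by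
    rw [← mul_assoc, Dop_mul_Xpow, add_mul, mul_assoc, Dop_mul_Dpow, smul_mul_assoc]
    exact add_mem (Xpow_mul_Dpow_mem_normalOrdered _ _)
      (Submodule.smul_mem _ _ (Xpow_mul_Dpow_mem_normalOrdered _ _))) hT

theorem weylD_le_normalOrdered : Subalgebra.toSubmodule (weylD n) ≤ normalOrdered := by
  rw [weylD, Algebra.adjoin_eq_span, Submodule.span_le]
  intro T hT
  induction hT using Submonoid.closure_induction_left with
  | one => simpa [Xpow_zero, Dpow_zero] using Xpow_mul_Dpow_mem_normalOrdered 0 0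
  | mul_left x hx y _ hy =>
    rcases hx with ⟨j, rfl⟩ | ⟨j, rfl⟩
    · exact Xop_mul_mem_normalOrdered j hy
    · exact Dop_mul_mem_normalOrdered j hy

def fallingFactorialPoly (β : Fin n →₀ ℕ) : MvPolynomial (Fin n) ℂ :=
  ∏ j, (descPochhammer ℂ (β j)).toMvPolynomial j

theorem eval_fallingFactorialPoly (γ β : Fin n →₀ ℕ) :
    eval (fun j => (γ j : ℂ)) (fallingFactorialPoly β) = multiDescFactorial γ β := by
  simp [fallingFactorialPoly, multiDescFactorial, descPochhammer_eval_eq_descFactorial]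

theorem coeff_Xpow_mul_Dpow_monomial_self (α β γ : Fin n →₀ ℕ) :
    coeff γ ((Xpow α * Dpow β) (monomial γ 1)) =
      if α = β then (multiDescFactorial γ β : ℂ) else 0 := by
  rw [Module.End.mul_apply, Dpow_monomial, Xpow_monomial, coeff_monomial]
  by_cases hβ : multiDescFactorial γ β = 0
  · simp [hβ]
  have hle := le_of_multiDescFactorial_ne_zero hβ
  congr 1
  nth_rewrite 2 [← tsub_add_cancel_of_le hle]
  rw [eq_iff_iff, add_comm (γ - β), add_left_inj]

theorem exists_eval_eq_coeff_of_mem_normalOrdered {T : Module.End ℂ (Pn n)}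
    (hT : T ∈ normalOrdered) :
    ∃ p : MvPolynomial (Fin n) ℂ, ∀ γ : Fin n →₀ ℕ,
      coeff γ (T (monomial γ 1)) = eval (fun j => (γ j : ℂ)) p := by
  induction hT using Submodule.span_induction with
  | mem x hx =>
    obtain ⟨⟨α, β⟩, rfl⟩ := hx
    refine ⟨if α = β then fallingFactorialPoly β else 0, fun γ => ?_⟩
    rw [coeff_Xpow_mul_Dpow_monomial_self, apply_ite (eval _), eval_fallingFactorialPoly,
      map_zero]
  | zero => exact ⟨0, fun γ => by simp⟩
  | add x y _ _ hx hy =>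
    obtain ⟨p, hp⟩ := hx
    obtain ⟨q, hq⟩ := hy
    exact ⟨p + q, fun γ => by simp [hp, hq]⟩
  | smul c x _ hx =>
    obtain ⟨p, hp⟩ := hx
    exact ⟨c • p, fun γ => by simp [hp]⟩

end

theorem stmt4_general (n m : ℕ) (a : Fin m → Fin n → ℂ)
    (h : ∀ l : Fin n → ℤ,
      (∀ v ∈ Submodule.span ℂ (Set.range a), ∑ j, (l j : ℂ) * v j = 0) → l = 0) :
    invD n m a = ↑(eulAlg n) := by
  ext ω
  refine ⟨fun ⟨hD, hτ⟩ => ?_, fun hE =>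
    ⟨eulAlg_le_weylD hE, fun i => commute_tauC_of_mem_eulAlg hE (a i)⟩⟩
  obtain ⟨p, hp⟩ := exists_eval_eq_coeff_of_mem_normalOrdered (weylD_le_normalOrdered hD)
  obtain ⟨T, hT, hTp⟩ := exists_mem_eulAlg_apply_monomial p
  suffices ω = T from this ▸ hT
  exact linearMap_ext_monomial_one fun γ => by
    rw [apply_monomial_eq_coeff_smul_of_commute_tauC h hτ, hp, hTp]

/-- if `A^⊥ ∩ ℤ^n = {0}` then `D^𝔤 = E`, i.e. the invariant differential
operators are exactly the polynomials in the Euler operators. -/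
theorem stmt4 (n m : ℕ) (hn : 1 ≤ n) (a : Fin m → Fin n → ℂ)
    (h : ∀ l : Fin n → ℤ,
      (∀ v ∈ Submodule.span ℂ (Set.range a), ∑ j, (l j : ℂ) * v j = 0) → l = 0) :
    invD n m a = ↑(eulAlg n) :=
  stmt4_general n m a h

end
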